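/- Let V : ℝ → ℝ be continuous with lim_{x→±∞} V(x)/(|x|+1) = +∞ and suppose V(x) = V(−x) + x for all x ∈ ℝ (equivalently, x ↦ V(x) − x/2 is an even function). Let μ be a Borel probability measure on ℝ with compact support, and let μ̃ be the pushforward of μ under the map x ↦ −x. Then I_V(μ̃) = I_V(μ), as elements of (−∞, +∞]. Consequently, if μ_V is the unique compactly supported probability measure minimizing I_V, then μ_V is symmetric: μ_V(−A) = μ_V(A) for every Borel set A. -/

import Mathlib

open MeasureTheory Filter Set
open scoped ENNReal

/-- The energy kernel `k_V(t,s) = ½log|t−s|⁻¹ + ½log|eᵗ−eˢ|⁻¹ + ½V(t) + ½V(s)`,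
as a real number off the diagonal (on the diagonal the kernel is `+∞`). -/
noncomputable def kernelV (V : ℝ → ℝ) (t s : ℝ) : ℝ :=
  1/2 * (-Real.log |t - s|) + 1/2 * (-Real.log |Real.exp t - Real.exp s|)
    + 1/2 * V t + 1/2 * V s

/-- The positive part of the energy kernel, valued in `ℝ≥0∞`; it is `⊤` on the diagonal. -/
noncomputable def kernelVPos (V : ℝ → ℝ) (p : ℝ × ℝ) : ℝ≥0∞ :=
  if p.1 = p.2 then ⊤ else ENNReal.ofReal (kernelV V p.1 p.2)

/-- The negative part of the energy kernel, valued in `ℝ≥0∞`; it vanishes on the diagonal. -/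
noncomputable def kernelVNeg (V : ℝ → ℝ) (p : ℝ × ℝ) : ℝ≥0∞ :=
  if p.1 = p.2 then 0 else ENNReal.ofReal (-(kernelV V p.1 p.2))

/-- The energy functional `I_V(μ) = ∬ k_V(t,s) dμ(t)dμ(s)`, with values in `EReal`. -/
noncomputable def energyV (V : ℝ → ℝ) (μ : Measure ℝ) : EReal :=
  ((∫⁻ p : ℝ × ℝ, kernelVPos V p ∂(μ.prod μ)) : EReal)
    - ((∫⁻ p : ℝ × ℝ, kernelVNeg V p ∂(μ.prod μ)) : EReal)

/-! Under `(t, s) ↦ (-t, -s)` the kernel `k_V` is invariant pointwise off the diagonal: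
`|t - s|` is unchanged, `-log |e^{-t} - e^{-s}|` gains `t + s`, and `V(-t) + V(-s)` loses
`t + s` by `V(x) = V(-x) + x`. Hence both parts of the energy are invariant under reflecting `μ`,
and a unique minimizer must coincide with its reflection. -/

lemma Real.log_abs_exp_neg_sub_exp_neg {t s : ℝ} (hts : t ≠ s) :
    Real.log |Real.exp (-t) - Real.exp (-s)| = Real.log |Real.exp t - Real.exp s| - t - s := by
  have hexp : Real.exp (-t) - Real.exp (-s) = (Real.exp s - Real.exp t) * Real.exp (-t - s) := by
    rw [sub_mul, ← Real.exp_add, ← Real.exp_add]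
    ring_nf
  have hne : Real.exp s - Real.exp t ≠ 0 :=
    sub_ne_zero.mpr (Real.exp_injective.ne hts.symm)
  rw [hexp, abs_mul, Real.abs_exp, Real.log_mul (abs_ne_zero.mpr hne) (Real.exp_ne_zero _),
    Real.log_exp, abs_sub_comm]
  ring

section Reflection

variable {V : ℝ → ℝ}

lemma kernelV_neg_neg (hsym : ∀ x : ℝ, V x = V (-x) + x) {t s : ℝ} (hts : t ≠ s) :
    kernelV V (-t) (-s) = kernelV V t s := by
  have hVt := hsym t
  have hVs := hsym s
  simp only [kernelV, neg_sub_neg, abs_sub_comm s t, Real.log_abs_exp_neg_sub_exp_neg hts]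
  linarith

lemma kernelVPos_neg_neg (hsym : ∀ x : ℝ, V x = V (-x) + x) (p : ℝ × ℝ) :
    kernelVPos V (Prod.map Neg.neg Neg.neg p) = kernelVPos V p := by
  by_cases h : p.1 = p.2
  · simp [kernelVPos, h]
  · simp [kernelVPos, h, kernelV_neg_neg hsym h]

lemma kernelVNeg_neg_neg (hsym : ∀ x : ℝ, V x = V (-x) + x) (p : ℝ × ℝ) :
    kernelVNeg V (Prod.map Neg.neg Neg.neg p) = kernelVNeg V p := by
  by_cases h : p.1 = p.2
  · simp [kernelVNeg, h]
  · simp [kernelVNeg, h, kernelV_neg_neg hsym h]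

lemma measurable_kernelV (hV : Measurable V) :
    Measurable (fun p : ℝ × ℝ => kernelV V p.1 p.2) := by
  unfold kernelV
  fun_prop

lemma measurable_kernelVPos (hV : Measurable V) : Measurable (kernelVPos V) :=
  Measurable.ite (measurableSet_eq_fun measurable_fst measurable_snd) measurable_const
    (measurable_kernelV hV).ennreal_ofReal

lemma measurable_kernelVNeg (hV : Measurable V) : Measurable (kernelVNeg V) :=
  Measurable.ite (measurableSet_eq_fun measurable_fst measurable_snd) measurable_const
    (measurable_kernelV hV).neg.ennreal_ofReal

end Reflection

lemma MeasureTheory.lintegral_prod_map_map_of_invariant {α : Type*} [MeasurableSpace α]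
    {g : α → α} (hg : Measurable g) {f : α × α → ℝ≥0∞} (hf : Measurable f)
    (hinv : ∀ p, f (Prod.map g g p) = f p) (μ : Measure α) [SFinite μ] :
    ∫⁻ p, f p ∂((μ.map g).prod (μ.map g)) = ∫⁻ p, f p ∂(μ.prod μ) := by
  rw [Measure.map_prod_map μ μ hg hg, lintegral_map hf (hg.prodMap hg)]
  exact lintegral_congr hinv

theorem energyV_map_neg {V : ℝ → ℝ} (hV : Measurable V) (hsym : ∀ x : ℝ, V x = V (-x) + x)
    (μ : Measure ℝ) [SFinite μ] : energyV V (μ.map Neg.neg) = energyV V μ := by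
  unfold energyV
  rw [lintegral_prod_map_map_of_invariant measurable_neg (measurable_kernelVPos hV)
      (kernelVPos_neg_neg hsym),
    lintegral_prod_map_map_of_invariant measurable_neg (measurable_kernelVNeg hV)
      (kernelVNeg_neg_neg hsym)]

lemma MeasureTheory.Measure.exists_isCompact_compl_null_map_neg {μ : Measure ℝ}
    (h : ∃ K : Set ℝ, IsCompact K ∧ μ Kᶜ = 0) :
    ∃ K : Set ℝ, IsCompact K ∧ μ.map Neg.neg Kᶜ = 0 := by
  obtain ⟨K, hK, hKc⟩ := h
  refine ⟨-K, hK.neg, ?_⟩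
  rw [Measure.map_apply measurable_neg hK.neg.isClosed.measurableSet.compl, Set.preimage_compl,
    Set.neg_preimage, neg_neg, hKc]

lemma map_neg_eq_self_of_unique_minimizer {E : Measure ℝ → EReal}
    (hE : ∀ μ : Measure ℝ, IsProbabilityMeasure μ → E (μ.map Neg.neg) = E μ)
    {μV : Measure ℝ} [IsProbabilityMeasure μV] (hμV : ∃ K : Set ℝ, IsCompact K ∧ μV Kᶜ = 0)
    (hmin : ∀ ν : Measure ℝ, IsProbabilityMeasure ν → E μV ≤ E ν)
    (huniq : ∀ ν : Measure ℝ, IsProbabilityMeasure ν → (∃ K : Set ℝ, IsCompact K ∧ ν Kᶜ = 0) →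
      (∀ ρ : Measure ℝ, IsProbabilityMeasure ρ → E ν ≤ E ρ) → ν = μV) :
    μV.map Neg.neg = μV :=
  huniq _ (Measure.isProbabilityMeasure_map measurable_neg.aemeasurable)
    (Measure.exists_isCompact_compl_null_map_neg hμV)
    (fun ρ hρ => (hE μV inferInstance).trans_le (hmin ρ hρ))

theorem energy_symmetric_general
    (V : ℝ → ℝ) (hcont : Continuous V)
    (hsym : ∀ x : ℝ, V x = V (-x) + x) :
    (∀ μ : Measure ℝ, IsProbabilityMeasure μ → (∃ K : Set ℝ, IsCompact K ∧ μ Kᶜ = 0) →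
      energyV V (Measure.map (fun x => -x) μ) = energyV V μ) ∧
    (∀ μV : Measure ℝ, IsProbabilityMeasure μV → (∃ K : Set ℝ, IsCompact K ∧ μV Kᶜ = 0) →
      (∀ ν : Measure ℝ, IsProbabilityMeasure ν → energyV V μV ≤ energyV V ν) →
      (∀ ν : Measure ℝ, IsProbabilityMeasure ν → (∃ K : Set ℝ, IsCompact K ∧ ν Kᶜ = 0) →
        (∀ ρ : Measure ℝ, IsProbabilityMeasure ρ → energyV V ν ≤ energyV V ρ) → ν = μV) →
      ∀ A : Set ℝ, MeasurableSet A → μV ((fun x => -x) ⁻¹' A) = μV A) := by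
  have hE : ∀ μ : Measure ℝ, IsProbabilityMeasure μ → energyV V (μ.map Neg.neg) = energyV V μ :=
    fun μ _ => energyV_map_neg hcont.measurable hsym μ
  refine ⟨fun μ hμ _ => hE μ hμ, fun μV _ hμV hmin huniq A hA => ?_⟩
  have hsymm := map_neg_eq_self_of_unique_minimizer hE hμV hmin huniq
  rw [← Measure.map_apply measurable_neg hA, hsymm]

/-- If `V(x) = V(−x) + x`, then the energy `I_V` is invariant under the
pushforward by `x ↦ −x`; consequently the unique compactly supported minimizing probability
measure is symmetric around the origin. -/
theorem energy_symmetric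
    (V : ℝ → ℝ) (hcont : Continuous V)
    (hgrowth : Tendsto (fun x => V x / (|x| + 1)) atTop atTop ∧
      Tendsto (fun x => V x / (|x| + 1)) atBot atTop)
    (hsym : ∀ x : ℝ, V x = V (-x) + x) :
    (∀ μ : Measure ℝ, IsProbabilityMeasure μ → (∃ K : Set ℝ, IsCompact K ∧ μ Kᶜ = 0) →
      energyV V (Measure.map (fun x => -x) μ) = energyV V μ) ∧
    (∀ μV : Measure ℝ, IsProbabilityMeasure μV → (∃ K : Set ℝ, IsCompact K ∧ μV Kᶜ = 0) →
      (∀ ν : Measure ℝ, IsProbabilityMeasure ν → energyV V μV ≤ energyV V ν) →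
      (∀ ν : Measure ℝ, IsProbabilityMeasure ν → (∃ K : Set ℝ, IsCompact K ∧ ν Kᶜ = 0) →
        (∀ ρ : Measure ℝ, IsProbabilityMeasure ρ → energyV V ν ≤ energyV V ρ) → ν = μV) →
      ∀ A : Set ℝ, MeasurableSet A → μV ((fun x => -x) ⁻¹' A) = μV A) :=
  energy_symmetric_general V hcont hsym
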